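/- arXiv:2602.16598 — 3 statements merged into one kernel-verified Lean document; each statement's English description precedes it below -/
import Mathlib

section
/- Let M be a 2n×2n real symmetric positive definite matrix written in block form M = [A, B; Bᵀ, C] with n×n blocks, where A is positive definite, and let P be a 2n×2n real symmetric matrix with blocks [P₁₁, P₁₂; P₁₂ᵀ, P₂₂]. If M⁻¹ ≼ P, then (C − Bᵀ A⁻¹ B)⁻¹ ≼ P₂₂. -/
open Matrix

namespace Matrix

variable {m n α : Type*}

theorem toBlocks₂₂_sub [Sub α] (M N : Matrix (m ⊕ n) (m ⊕ n) α) :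
    (M - N).toBlocks₂₂ = M.toBlocks₂₂ - N.toBlocks₂₂ :=
  rfl

theorem PosSemidef.toBlocks₂₂ [CommRing α] [PartialOrder α] [StarRing α]
    {M : Matrix (m ⊕ n) (m ⊕ n) α} (hM : M.PosSemidef) : M.toBlocks₂₂.PosSemidef :=
  hM.submatrix Sum.inr

variable [Fintype m] [Fintype n] [DecidableEq m] [DecidableEq n]

theorem toBlocks₂₂_inv_fromBlocks [CommRing α] {A : Matrix m m α} {B : Matrix m n α}
    {C : Matrix n m α} {D : Matrix n n α} (hA : IsUnit A) (hM : IsUnit (fromBlocks A B C D)) :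
    (fromBlocks A B C D)⁻¹.toBlocks₂₂ = (D - C * A⁻¹ * B)⁻¹ := by
  let := hA.invertible
  let := hM.invertible
  let := invertibleOfFromBlocks₁₁Invertible A B C D
  rw [← invOf_eq_nonsing_inv (fromBlocks A B C D), invOf_fromBlocks₁₁_eq, toBlocks_fromBlocks₂₂,
    invOf_eq_nonsing_inv, invOf_eq_nonsing_inv]

end Matrix

theorem stmt6_general {n : ℕ} (A B C P₁₁ P₁₂ P₂₂ : Matrix (Fin n) (Fin n) ℝ)
    (hM : (Matrix.fromBlocks A B Bᵀ C).PosDef) (hA : A.PosDef)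
    (h : (Matrix.fromBlocks P₁₁ P₁₂ P₁₂ᵀ P₂₂ -
          (Matrix.fromBlocks A B Bᵀ C)⁻¹).PosSemidef) :
    (P₂₂ - (C - Bᵀ * A⁻¹ * B)⁻¹).PosSemidef := by
  have h₂₂ := h.toBlocks₂₂
  rwa [toBlocks₂₂_sub, toBlocks_fromBlocks₂₂, toBlocks₂₂_inv_fromBlocks hA.isUnit hM.isUnit]
    at h₂₂

/-- If `M = [A, B; Bᵀ, C]` is real symmetric positive definite with `A` positive
definite, and `P = [P₁₁, P₁₂; P₁₂ᵀ, P₂₂]` is real symmetric with `M⁻¹ ≼ P`, then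
`(C - Bᵀ A⁻¹ B)⁻¹ ≼ P₂₂`. -/
theorem stmt6 {n : ℕ} (A B C P₁₁ P₁₂ P₂₂ : Matrix (Fin n) (Fin n) ℝ)
    (hM : (Matrix.fromBlocks A B Bᵀ C).PosDef) (hA : A.PosDef)
    (hP₁₁ : P₁₁.IsSymm) (hP₂₂ : P₂₂.IsSymm)
    (h : (Matrix.fromBlocks P₁₁ P₁₂ P₁₂ᵀ P₂₂ -
          (Matrix.fromBlocks A B Bᵀ C)⁻¹).PosSemidef) :
    (P₂₂ - (C - Bᵀ * A⁻¹ * B)⁻¹).PosSemidef :=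
  stmt6_general A B C P₁₁ P₁₂ P₂₂ hM hA h
end

section
/- Let q > 0, r > 0, k > 0 be real numbers. For m ∈ ℝ define the real symmetric 2×2 matrix S(m) = ![![k⁻² + m/q + r⁻¹, m/q], ![m/q, m/q − k⁻²]]. Then S(m) is positive semidefinite if and only if m ≥ q·(k⁻² + r·k⁻⁴). Consequently, the minimal constant sensor query rate achieving the accuracy constraint is m_s = q·(1/k² + r/k⁴). -/
/-!
The determinant of `S(m)` equals `r⁻¹ (m/q - k⁻² - r k⁻⁴)`, which is affine in `m`, and its
nonnegativity already forces the diagonal entries to be nonnegative. By the `2 × 2` criterion the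
feasible rates therefore form the half-line `m ≥ q (k⁻² + r k⁻⁴)`, whose least element is `m_s`.
-/

open Matrix

theorem Matrix.posSemidef_fin_two_iff (a b c : ℝ) :
    (!![a, b; b, c] : Matrix (Fin 2) (Fin 2) ℝ).PosSemidef ↔
      0 ≤ a ∧ 0 ≤ c ∧ b ^ 2 ≤ a * c := by
  constructor
  · intro h
    have hdet := h.det_nonneg
    rw [det_fin_two_of] at hdet
    exact ⟨by simpa using h.diag_nonneg (i := 0), by simpa using h.diag_nonneg (i := 1),
      by nlinarith⟩
  · rintro ⟨ha, hc, hb⟩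
    refine .of_dotProduct_mulVec_nonneg ?_ fun x => ?_
    · ext i j
      fin_cases i <;> fin_cases j <;> rfl
    · simp only [star_trivial, mulVec, dotProduct, Fin.sum_univ_two, of_apply, cons_val',
        cons_val_zero, cons_val_one, empty_val', cons_val_fin_one]
      rcases ha.eq_or_lt with rfl | ha
      · obtain rfl : b = 0 := by nlinarith
        nlinarith [mul_nonneg hc (mul_self_nonneg (x 1))]
      · refine nonneg_of_mul_nonneg_right ?_ ha
        -- `a` times the quadratic form is `(a x₀ + b x₁)² + (ac - b²) x₁²`
        nlinarith [sq_nonneg (a * x 0 + b * x 1), mul_nonneg (sub_nonneg.2 hb) (sq_nonneg (x 1))]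

theorem posSemidef_queryRate_iff (A r u : ℝ) (hr : 0 < r) :
    (!![A + u + r⁻¹, u; u, u - A] : Matrix (Fin 2) (Fin 2) ℝ).PosSemidef ↔
      A + r * A ^ 2 ≤ u := by
  have hdet : (A + u + r⁻¹) * (u - A) - u ^ 2 = r⁻¹ * (u - (A + r * A ^ 2)) := by
    field_simp
    ring
  have hr' : 0 < r⁻¹ := inv_pos.2 hr
  rw [posSemidef_fin_two_iff]
  constructor
  · rintro ⟨-, -, h⟩
    nlinarith
  · intro h
    have hdiag : A + (A + r * A ^ 2) + r⁻¹ = r⁻¹ * (1 + r * A) ^ 2 := by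
      field_simp
      ring
    have hA2 : 0 ≤ r * A ^ 2 := by positivity
    refine ⟨?_, by linarith, by nlinarith⟩
    nlinarith [mul_nonneg hr'.le (sq_nonneg (1 + r * A))]

theorem stmt12_general (q r k : ℝ) (hq : 0 < q) (hr : 0 < r) :
    (∀ m : ℝ,
      (!![(k ^ 2)⁻¹ + m / q + r⁻¹, m / q; m / q, m / q - (k ^ 2)⁻¹] :
          Matrix (Fin 2) (Fin 2) ℝ).PosSemidef ↔
        m ≥ q * ((k ^ 2)⁻¹ + r * (k ^ 4)⁻¹)) ∧
    IsLeast {m : ℝ |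
        (!![(k ^ 2)⁻¹ + m / q + r⁻¹, m / q; m / q, m / q - (k ^ 2)⁻¹] :
          Matrix (Fin 2) (Fin 2) ℝ).PosSemidef}
      (q * (1 / k ^ 2 + r / k ^ 4)) := by
  have hpsd (m : ℝ) : (!![(k ^ 2)⁻¹ + m / q + r⁻¹, m / q; m / q, m / q - (k ^ 2)⁻¹] :
      Matrix (Fin 2) (Fin 2) ℝ).PosSemidef ↔ m ≥ q * ((k ^ 2)⁻¹ + r * (k ^ 4)⁻¹) := by
    rw [posSemidef_queryRate_iff _ _ _ hr, le_div_iff₀ hq, inv_pow, ← pow_mul, ge_iff_le,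
      mul_comm q]
  have hms : q * (1 / k ^ 2 + r / k ^ 4) = q * ((k ^ 2)⁻¹ + r * (k ^ 4)⁻¹) := by
    rw [one_div, div_eq_mul_inv]
  rw [hms]
  exact ⟨hpsd, Set.ext hpsd ▸ isLeast_Ici⟩

/-- One-dimensional constant-query-rate SDP: for `q, r, k > 0`, the `2 × 2` matrix
`S(m) = [[k⁻² + m/q + r⁻¹, m/q], [m/q, m/q - k⁻²]]` is positive semidefinite iff
`m ≥ q (k⁻² + r k⁻⁴)`; consequently the minimal feasible constant query rate is
`m_s = q (1/k² + r/k⁴)`. -/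
theorem stmt12 (q r k : ℝ) (hq : 0 < q) (hr : 0 < r) (hk : 0 < k) :
    (∀ m : ℝ,
      (!![(k ^ 2)⁻¹ + m / q + r⁻¹, m / q; m / q, m / q - (k ^ 2)⁻¹] :
          Matrix (Fin 2) (Fin 2) ℝ).PosSemidef ↔
        m ≥ q * ((k ^ 2)⁻¹ + r * (k ^ 4)⁻¹)) ∧
    IsLeast {m : ℝ |
        (!![(k ^ 2)⁻¹ + m / q + r⁻¹, m / q; m / q, m / q - (k ^ 2)⁻¹] :
          Matrix (Fin 2) (Fin 2) ℝ).PosSemidef}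
      (q * (1 / k ^ 2 + r / k ^ 4)) :=
  stmt12_general q r k hq hr
end

section
/- Let D₁₁ be an n×n real symmetric positive semidefinite matrix, D₁₂ an n×n real matrix, D₂₂ an n×n real symmetric matrix, and k > 0. Assume the block matrix Matrix.fromBlocks (k⁻²·I + D₁₁) D₁₂ D₁₂ᵀ (D₂₂ − k⁻²·I) is positive semidefinite. Define the sequence J₀ = k⁻²·I and J_{n+1} = D₂₂ − D₁₂ᵀ (D₁₁ + J_n)⁻¹ D₁₂. Then for every n, the matrix D₁₁ + J_n is positive definite (so the recursion is well defined) and k⁻²·I ≼ J_n. -/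
/-!
With `c = k⁻²`, the invariant `c • 1 ≼ J n` propagates: it makes `D₁₁ + J n ≽ c • 1 + D₁₁`
positive definite, and enlarging the top-left block of the positive semidefinite block matrix
`[c • 1 + D₁₁, D₁₂; D₁₂ᵀ, D₂₂ - c • 1]` to `D₁₁ + J n` keeps it positive semidefinite, so its
Schur complement `D₂₂ - c • 1 - D₁₂ᵀ (D₁₁ + J n)⁻¹ D₁₂ = J (n + 1) - c • 1` is positive
semidefinite.
-/

open Matrix
open scoped ComplexOrder

namespace Matrix

variable {m n 𝕜 : Type*} [Fintype m] [Fintype n] [RCLike 𝕜]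

lemma PosSemidef.fromBlocks_zero {P : Matrix m m 𝕜} (hP : P.PosSemidef) :
    (fromBlocks P 0 0 (0 : Matrix n n 𝕜)).PosSemidef := by
  refine .of_dotProduct_mulVec_nonneg ?_ fun x ↦ ?_
  · simp [IsHermitian, fromBlocks_conjTranspose, hP.isHermitian.eq]
  · simpa [dotProduct, mulVec, Fintype.sum_sum_type, fromBlocks]
      using hP.dotProduct_mulVec_nonneg (x ∘ Sum.inl)

lemma PosSemidef.sub_conjTranspose_mul_inv_mul_of_fromBlocks [DecidableEq m]
    {A₀ A : Matrix m m 𝕜} {B : Matrix m n 𝕜} {D : Matrix n n 𝕜}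
    (hblock : (fromBlocks A₀ B Bᴴ D).PosSemidef) (hle : (A - A₀).PosSemidef) (hA : A.PosDef) :
    (D - Bᴴ * A⁻¹ * B).PosSemidef := by
  have : Invertible A := hA.isUnit.invertible
  have hsum : fromBlocks A B Bᴴ D = fromBlocks A₀ B Bᴴ D + fromBlocks (A - A₀) 0 0 0 := by
    simp [fromBlocks_add]
  exact (PosDef.fromBlocks₁₁ B D hA).mp (hsum ▸ hblock.add hle.fromBlocks_zero)

end Matrix

theorem stmt14_general {d : ℕ} (D₁₁ D₁₂ D₂₂ : Matrix (Fin d) (Fin d) ℝ)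
    (hD₁₁ : D₁₁.PosSemidef) (k : ℝ) (hk : 0 < k)
    (hblock : (Matrix.fromBlocks
        ((k ^ 2)⁻¹ • (1 : Matrix (Fin d) (Fin d) ℝ) + D₁₁) D₁₂ D₁₂ᵀ
        (D₂₂ - (k ^ 2)⁻¹ • (1 : Matrix (Fin d) (Fin d) ℝ))).PosSemidef)
    (J : ℕ → Matrix (Fin d) (Fin d) ℝ)
    (hJ0 : J 0 = (k ^ 2)⁻¹ • (1 : Matrix (Fin d) (Fin d) ℝ))
    (hJsucc : ∀ n : ℕ, J (n + 1) = D₂₂ - D₁₂ᵀ * (D₁₁ + J n)⁻¹ * D₁₂) :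
    ∀ n : ℕ, (D₁₁ + J n).PosDef ∧
      (J n - (k ^ 2)⁻¹ • (1 : Matrix (Fin d) (Fin d) ℝ)).PosSemidef := by
  set c : ℝ := (k ^ 2)⁻¹
  have hbase : (c • 1 + D₁₁ : Matrix (Fin d) (Fin d) ℝ).PosDef :=
    (PosDef.one.smul (by positivity)).add_posSemidef hD₁₁
  have hpd : ∀ n, (J n - c • 1).PosSemidef → (D₁₁ + J n).PosDef := fun n h ↦ by
    convert PosDef.posSemidef_add h hbase using 1
    abel
  rw [← conjTranspose_eq_transpose_of_trivial] at hblock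
  have hle : ∀ n, (J n - c • 1).PosSemidef := by
    intro n
    induction n with
    | zero => simpa [hJ0] using PosSemidef.zero
    | succ n ih =>
      have hgap : (D₁₁ + J n - (c • 1 + D₁₁)).PosSemidef := by
        convert ih using 1
        abel
      have hschur := hblock.sub_conjTranspose_mul_inv_mul_of_fromBlocks hgap (hpd n ih)
      rw [hJsucc, ← conjTranspose_eq_transpose_of_trivial]
      simpa [sub_right_comm] using hschur
  exact fun n ↦ ⟨hpd n (hle n), hle n⟩

/-- Invariance of the information bound under the posterior Cramér–Rao recursion:
if the block matrix `[k⁻²•I + D₁₁, D₁₂; D₁₂ᵀ, D₂₂ - k⁻²•I]` is positive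
semidefinite and `J₀ = k⁻²•I`, `J_{n+1} = D₂₂ - D₁₂ᵀ (D₁₁ + J_n)⁻¹ D₁₂`, then for
every `n` the matrix `D₁₁ + J_n` is positive definite and `k⁻²•I ≼ J_n`. -/
theorem stmt14 {d : ℕ} (D₁₁ D₁₂ D₂₂ : Matrix (Fin d) (Fin d) ℝ)
    (hD₁₁ : D₁₁.PosSemidef) (hD₂₂ : D₂₂.IsSymm) (k : ℝ) (hk : 0 < k)
    (hblock : (Matrix.fromBlocks
        ((k ^ 2)⁻¹ • (1 : Matrix (Fin d) (Fin d) ℝ) + D₁₁) D₁₂ D₁₂ᵀ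
        (D₂₂ - (k ^ 2)⁻¹ • (1 : Matrix (Fin d) (Fin d) ℝ))).PosSemidef)
    (J : ℕ → Matrix (Fin d) (Fin d) ℝ)
    (hJ0 : J 0 = (k ^ 2)⁻¹ • (1 : Matrix (Fin d) (Fin d) ℝ))
    (hJsucc : ∀ n : ℕ, J (n + 1) = D₂₂ - D₁₂ᵀ * (D₁₁ + J n)⁻¹ * D₁₂) :
    ∀ n : ℕ, (D₁₁ + J n).PosDef ∧
      (J n - (k ^ 2)⁻¹ • (1 : Matrix (Fin d) (Fin d) ℝ)).PosSemidef :=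
  stmt14_general D₁₁ D₁₂ D₂₂ hD₁₁ k hk hblock J hJ0 hJsucc
end
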